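/- arXiv:2502.05096 — 3 statements merged into one kernel-verified Lean document; each statement's English description precedes it below -/
import Mathlib

section
/- Let (C, C₋, C₊) be a Reedy category, (α, θ) : ([m], X) → ([n], Y) a morphism in ∫N^{-,+}(C), and β : [m] → [n] a morphism in Δ with α ≤ β pointwise. Then the following are equivalent: (1) there exists a morphism (β, φ) : ([m], X) → ([n], Y) in ∫N^{-,+}(C) with (α, θ) ≤ (β, φ); (2) for each 0 ≤ i ≤ m, the composite Y(α(i) ≤ β(i)) ∘ θ_i : X(i) → Y(β(i)) lies in C₊. Moreover, when these conditions hold, the morphism (β, φ) in (1) is unique, and its components are φ_i = Y(α(i) ≤ β(i)) ∘ θ_i. -/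
namespace ReedyPaper

open CategoryTheory

universe v₂ u₂ v₁ u₁ v u

variable {C : Type u} [Category.{v} C]

def IsIdMor {x y : C} (f : x ⟶ y) : Prop := ∃ h : x = y, f = eqToHom h

structure ReedyStruct (C : Type u) [Category.{v} C] where
  neg : MorphismProperty C
  pos : MorphismProperty C
  neg_id : ∀ x : C, neg (𝟙 x)
  pos_id : ∀ x : C, pos (𝟙 x)
  neg_comp : ∀ {x y z : C} (f : x ⟶ y) (g : y ⟶ z), neg f → neg g → neg (f ≫ g)
  pos_comp : ∀ {x y z : C} (f : x ⟶ y) (g : y ⟶ z), pos f → pos g → pos (f ≫ g)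
  factor_existsUnique : ∀ {x y : C} (f : x ⟶ y),
    ∃! t : Σ z : C, (x ⟶ z) × (z ⟶ y), neg t.2.1 ∧ pos t.2.2 ∧ t.2.1 ≫ t.2.2 = f
  wf : WellFounded (fun x y : C =>
    (∃ f : x ⟶ y, pos f ∧ ¬ IsIdMor f) ∨ (∃ f : y ⟶ x, neg f ∧ ¬ IsIdMor f))

structure ChainObj (C : Type u) [Category.{v} C] where
  n : ℕ
  X : Fin (n + 1) ⥤ C

structure ChainHom (P Q : ChainObj C) where
  α : Fin (P.n + 1) →o Fin (Q.n + 1)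
  θ : ∀ i : Fin (P.n + 1), P.X.obj i ⟶ Q.X.obj (α i)
  natural : ∀ {i j : Fin (P.n + 1)} (h : i ≤ j),
    P.X.map (homOfLE h) ≫ θ j = θ i ≫ Q.X.map (homOfLE (α.monotone h))

theorem ChainHom.ext' {P Q : ChainObj C} {f g : ChainHom P Q}
    (hα : f.α = g.α) (hθ : HEq f.θ g.θ) : f = g := by
  cases f; cases g; cases hα; cases hθ; rfl

def ChainHom.id (P : ChainObj C) : ChainHom P P where
  α := OrderHom.id
  θ i := 𝟙 _
  natural h := (Category.comp_id _).trans (Category.id_comp _).symm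

def ChainHom.comp {P Q S : ChainObj C} (f : ChainHom P Q) (g : ChainHom Q S) :
    ChainHom P S where
  α := g.α.comp f.α
  θ i := f.θ i ≫ g.θ (f.α i)
  natural {i j} h := by
    show P.X.map (homOfLE h) ≫ (f.θ j ≫ g.θ (f.α j)) =
      (f.θ i ≫ g.θ (f.α i)) ≫ S.X.map (homOfLE (g.α.monotone (f.α.monotone h)))
    rw [← Category.assoc, f.natural h, Category.assoc, g.natural (f.α.monotone h),
      ← Category.assoc]

instance : Category (ChainObj C) where
  Hom := ChainHom
  id := ChainHom.id
  comp := ChainHom.comp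
  id_comp f := ChainHom.ext' rfl (heq_of_eq (funext fun i => Category.id_comp _))
  comp_id f := ChainHom.ext' rfl (heq_of_eq (funext fun i => Category.comp_id _))
  assoc f g h := ChainHom.ext' rfl (heq_of_eq (funext fun i => Category.assoc _ _ _))

/-- The partial order on the hom-sets of `∫N(C)` (and of `∫N^{-,+}(C)`):
`(α, θ) ≤ (α', θ')` iff `α ≤ α'` pointwise and `θ'ᵢ = Y(α(i) ≤ α'(i)) ∘ θᵢ` for all `i`. -/
def ChainHom.le {P Q : ChainObj C} (f g : ChainHom P Q) : Prop :=
  (∀ i, f.α i ≤ g.α i) ∧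
    ∀ (i : Fin (P.n + 1)) (h : f.α i ≤ g.α i), g.θ i = f.θ i ≫ Q.X.map (homOfLE h)

theorem ChainHom.le_comp_right {P Q S : ChainObj C} {f f' : P ⟶ Q} (g : Q ⟶ S)
    (h : ChainHom.le f f') : ChainHom.le (f ≫ g) (f' ≫ g) := by
  refine ⟨fun i => g.α.monotone (h.1 i), fun i hi => ?_⟩
  show f'.θ i ≫ g.θ (f'.α i) = (f.θ i ≫ g.θ (f.α i)) ≫ S.X.map (homOfLE hi)
  rw [h.2 i (h.1 i), Category.assoc, g.natural (h.1 i), ← Category.assoc]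
  rfl

theorem ChainHom.le_comp_left {P Q S : ChainObj C} (f : P ⟶ Q) {g g' : Q ⟶ S}
    (h : ChainHom.le g g') : ChainHom.le (f ≫ g) (f ≫ g') := by
  refine ⟨fun i => h.1 (f.α i), fun i hi => ?_⟩
  show f.θ i ≫ g'.θ (f.α i) = (f.θ i ≫ g.θ (f.α i)) ≫ S.X.map (homOfLE hi)
  rw [h.2 (f.α i) (h.1 (f.α i)), ← Category.assoc]
  rfl

/-- Objects of `∫N^{-,+}(C)`: chains all of whose morphisms lie in `C₋`. -/
structure NegObj (R : ReedyStruct C) where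
  n : ℕ
  X : Fin (n + 1) ⥤ C
  negMap : ∀ {i j : Fin (n + 1)} (h : i ≤ j), R.neg (X.map (homOfLE h))

variable {R : ReedyStruct C}

/-- The underlying object of `∫N(C)`. -/
def NegObj.chain (P : NegObj R) : ChainObj C := ⟨P.n, P.X⟩

/-- Morphisms of `∫N^{-,+}(C)`: morphisms of `∫N(C)` all of whose components lie in `C₊`. -/
def NegHomT (P Q : NegObj R) : Type v :=
  { f : P.chain ⟶ Q.chain // ∀ i, R.pos (f.θ i) }

def NegHomT.id (P : NegObj R) : NegHomT P P := ⟨𝟙 P.chain, fun _ => R.pos_id _⟩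

def NegHomT.comp {P Q S : NegObj R} (f : NegHomT P Q) (g : NegHomT Q S) : NegHomT P S :=
  ⟨f.1 ≫ g.1, fun i => by
    show R.pos (f.1.θ i ≫ g.1.θ (f.1.α i))
    exact R.pos_comp _ _ (f.2 i) (g.2 _)⟩

theorem NegHomT.id_comp {P Q : NegObj R} (f : NegHomT P Q) : (NegHomT.id P).comp f = f := by
  apply Subtype.ext
  show 𝟙 P.chain ≫ f.1 = f.1
  exact Category.id_comp f.1

theorem NegHomT.comp_id {P Q : NegObj R} (f : NegHomT P Q) : f.comp (NegHomT.id Q) = f := by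
  apply Subtype.ext
  show f.1 ≫ 𝟙 Q.chain = f.1
  exact Category.comp_id f.1

theorem NegHomT.comp_assoc {P Q S T : NegObj R} (f : NegHomT P Q) (g : NegHomT Q S)
    (h : NegHomT S T) : (f.comp g).comp h = f.comp (g.comp h) := by
  apply Subtype.ext
  show (f.1 ≫ g.1) ≫ h.1 = f.1 ≫ (g.1 ≫ h.1)
  exact Category.assoc f.1 g.1 h.1

/-- The category `∫N^{-,+}(C)`. -/
instance : Category (NegObj R) where
  Hom := NegHomT
  id := NegHomT.id
  comp := NegHomT.comp
  id_comp := NegHomT.id_comp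
  comp_id := NegHomT.comp_id
  assoc := NegHomT.comp_assoc

/-- The order on the hom-sets of `∫N^{-,+}(C)`. -/
def NegHom.le {P Q : NegObj R} (f g : P ⟶ Q) : Prop := ChainHom.le f.1 g.1

/-- The equivalence relation `∼` on the hom-sets of `∫N^{-,+}(C)`: the
symmetric-transitive closure of `≤`. -/
def NegHom.equiv {P Q : NegObj R} (f g : P ⟶ Q) : Prop :=
  Relation.EqvGen (fun a b : P ⟶ Q => NegHom.le a b) f g

theorem NegHom.le_comp_right {P Q S : NegObj R} {f f' : P ⟶ Q} (g : Q ⟶ S)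
    (h : NegHom.le f f') : NegHom.le (f ≫ g) (f' ≫ g) :=
  ChainHom.le_comp_right g.1 h

theorem NegHom.le_comp_left {P Q S : NegObj R} (f : P ⟶ Q) {g g' : Q ⟶ S}
    (h : NegHom.le g g') : NegHom.le (f ≫ g) (f ≫ g') :=
  ChainHom.le_comp_left f.1 h

/-- Identity-reflectingness of a chain. -/
def NegObj.IdRefl (P : NegObj R) : Prop :=
  ∀ {i j : Fin (P.n + 1)} (h : i ≤ j), IsIdMor (P.X.map (homOfLE h)) → i = j

/-- Objects of `∫N^{--,+}_+(C)`: identity-reflecting chains in `C₋`. -/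
structure StrictObj (R : ReedyStruct C) where
  toNegObj : NegObj R
  idRefl : toNegObj.IdRefl

/-- Morphisms of `∫N^{--,+}_+(C)`: morphisms of `∫N^{-,+}(C)` with `α` injective. -/
def StrictHomT (P Q : StrictObj R) : Type v :=
  { f : P.toNegObj ⟶ Q.toNegObj // Function.Injective f.1.α }

def StrictHomT.id (P : StrictObj R) : StrictHomT P P :=
  ⟨𝟙 P.toNegObj, fun _ _ h => h⟩

def StrictHomT.comp {P Q S : StrictObj R} (f : StrictHomT P Q) (g : StrictHomT Q S) :
    StrictHomT P S :=
  ⟨f.1 ≫ g.1, fun _ _ h => f.2 (g.2 h)⟩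

/-- The category `∫N^{--,+}_+(C)`. -/
instance : Category (StrictObj R) where
  Hom := StrictHomT
  id := StrictHomT.id
  comp := StrictHomT.comp
  id_comp f := Subtype.ext (Category.id_comp f.1)
  comp_id f := Subtype.ext (Category.comp_id f.1)
  assoc f g h := Subtype.ext (Category.assoc f.1 g.1 h.1)

/-- The order on the hom-sets of `∫N^{--,+}_+(C)`. -/
def StrictHom.le {P Q : StrictObj R} (f g : P ⟶ Q) : Prop := NegHom.le f.1 g.1

/-- The equivalence relation `∼` on the hom-sets of `∫N^{--,+}_+(C)`. -/
def StrictHom.equiv {P Q : StrictObj R} (f g : P ⟶ Q) : Prop :=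
  Relation.EqvGen (fun a b : P ⟶ Q => StrictHom.le a b) f g

theorem StrictHom.le_comp_right {P Q S : StrictObj R} {f f' : P ⟶ Q} (g : Q ⟶ S)
    (h : StrictHom.le f f') : StrictHom.le (f ≫ g) (f' ≫ g) :=
  NegHom.le_comp_right g.1 h

theorem StrictHom.le_comp_left {P Q S : StrictObj R} (f : P ⟶ Q) {g g' : Q ⟶ S}
    (h : StrictHom.le g g') : StrictHom.le (f ≫ g) (f ≫ g') :=
  NegHom.le_comp_left f.1 h

/-- Objects of `Down_*(C)`: the same as those of `∫N^{-,+}(C)`. -/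
structure DownStar (R : ReedyStruct C) where
  obj : NegObj R

/-- The category `Down_*(C)`: hom-sets are the quotients of those of `∫N^{-,+}(C)`
by the symmetric-transitive closure of `≤`. -/
instance : Category (DownStar R) where
  Hom P Q := Quot (fun f g : P.obj ⟶ Q.obj => NegHom.le f g)
  id P := Quot.mk _ (𝟙 P.obj)
  comp {P Q S} f g :=
    Quot.lift
      (fun f' => Quot.lift (fun g' => Quot.mk _ (f' ≫ g'))
        (fun _ _ hg => Quot.sound (NegHom.le_comp_left f' hg)) g)
      (fun f₁ f₂ hf => Quot.inductionOn g (fun g' =>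
        Quot.sound (NegHom.le_comp_right g' hf))) f
  id_comp f := Quot.inductionOn f fun f' => congrArg (Quot.mk _) (Category.id_comp f')
  comp_id f := Quot.inductionOn f fun f' => congrArg (Quot.mk _) (Category.comp_id f')
  assoc f g h :=
    Quot.inductionOn f fun f' => Quot.inductionOn g fun g' => Quot.inductionOn h fun h' =>
      congrArg (Quot.mk _) (Category.assoc f' g' h')

/-- Objects of `Down(C)`: the same as those of `∫N^{--,+}_+(C)`. -/
structure Down (R : ReedyStruct C) where
  obj : StrictObj R

/-- The category `Down(C)`: hom-sets are the quotients of those of `∫N^{--,+}_+(C)`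
by the symmetric-transitive closure of `≤`. -/
instance : Category (Down R) where
  Hom P Q := Quot (fun f g : P.obj ⟶ Q.obj => StrictHom.le f g)
  id P := Quot.mk _ (𝟙 P.obj)
  comp {P Q S} f g :=
    Quot.lift
      (fun f' => Quot.lift (fun g' => Quot.mk _ (f' ≫ g'))
        (fun _ _ hg => Quot.sound (StrictHom.le_comp_left f' hg)) g)
      (fun f₁ f₂ hf => Quot.inductionOn g (fun g' =>
        Quot.sound (StrictHom.le_comp_right g' hf))) f
  id_comp f := Quot.inductionOn f fun f' => congrArg (Quot.mk _) (Category.id_comp f')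
  comp_id f := Quot.inductionOn f fun f' => congrArg (Quot.mk _) (Category.comp_id f')
  assoc f g h :=
    Quot.inductionOn f fun f' => Quot.inductionOn g fun g' => Quot.inductionOn h fun h' =>
      congrArg (Quot.mk _) (Category.assoc f' g' h')

/-- The quotient functor `∫N^{-,+}(C) → Down_*(C)`. -/
def qStar (R : ReedyStruct C) : NegObj R ⥤ DownStar R where
  obj P := ⟨P⟩
  map f := Quot.mk _ f
  map_id _ := rfl
  map_comp _ _ := rfl

/-- The inclusion functor `Down(C) → Down_*(C)`. -/
def downInclusion (R : ReedyStruct C) : Down R ⥤ DownStar R where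
  obj P := ⟨P.obj.toNegObj⟩
  map {P Q} f :=
    Quot.lift (fun f' : P.obj ⟶ Q.obj => Quot.mk _ f'.1) (fun _ _ h => Quot.sound h) f
  map_id _ := rfl
  map_comp {P Q S} f g := by
    induction f using Quot.ind
    induction g using Quot.ind
    rfl

/-- The last-component functor `∫N(C) → C`. -/
def lastChain : ChainObj C ⥤ C where
  obj P := P.X.obj (Fin.last P.n)
  map {P Q} f := f.θ (Fin.last P.n) ≫ Q.X.map (homOfLE (Fin.le_last (f.α (Fin.last P.n))))
  map_id P := by
    show 𝟙 (P.X.obj (Fin.last P.n)) ≫ P.X.map (homOfLE (Fin.le_last (Fin.last P.n))) = 𝟙 _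
    rw [Category.id_comp]
    exact P.X.map_id _
  map_comp {P Q S} f g := by
    show (f.θ (Fin.last P.n) ≫ g.θ (f.α (Fin.last P.n))) ≫
        S.X.map (homOfLE (Fin.le_last (g.α (f.α (Fin.last P.n))))) =
      (f.θ (Fin.last P.n) ≫ Q.X.map (homOfLE (Fin.le_last (f.α (Fin.last P.n))))) ≫
        g.θ (Fin.last Q.n) ≫ S.X.map (homOfLE (Fin.le_last (g.α (Fin.last Q.n))))
    rw [Category.assoc, Category.assoc, ← Category.assoc (Q.X.map _),
      g.natural (Fin.le_last (f.α (Fin.last P.n))), Category.assoc, ← Functor.map_comp,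
      homOfLE_comp]

theorem lastChain_eq_of_le {P Q : ChainObj C} {f g : P ⟶ Q} (h : ChainHom.le f g) :
    lastChain.map f = lastChain.map g := by
  show f.θ (Fin.last P.n) ≫ Q.X.map (homOfLE (Fin.le_last (f.α (Fin.last P.n)))) =
    g.θ (Fin.last P.n) ≫ Q.X.map (homOfLE (Fin.le_last (g.α (Fin.last P.n))))
  rw [h.2 (Fin.last P.n) (h.1 (Fin.last P.n)), Category.assoc, ← Functor.map_comp,
    homOfLE_comp]

/-- The forgetful functor `∫N^{-,+}(C) → ∫N(C)`. -/
def negForget (R : ReedyStruct C) : NegObj R ⥤ ChainObj C where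
  obj P := P.chain
  map f := f.1
  map_id _ := rfl
  map_comp _ _ := rfl

/-- The last-component functor `∫N^{-,+}(C) → C`. -/
def lastNeg (R : ReedyStruct C) : NegObj R ⥤ C := negForget R ⋙ lastChain

/-- The forgetful functor `∫N^{--,+}_+(C) → ∫N^{-,+}(C)`. -/
def strictForget (R : ReedyStruct C) : StrictObj R ⥤ NegObj R where
  obj P := P.toNegObj
  map f := f.1
  map_id _ := rfl
  map_comp _ _ := rfl

/-- The last-component functor `∫N^{--,+}_+(C) → C`. -/
def lastStrict (R : ReedyStruct C) : StrictObj R ⥤ C := strictForget R ⋙ lastNeg R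

/-- The last-component functor `Down_*(C) → C`. -/
def lastDownStar (R : ReedyStruct C) : DownStar R ⥤ C where
  obj P := (lastNeg R).obj P.obj
  map {P Q} f :=
    Quot.lift (fun f' : P.obj ⟶ Q.obj => (lastNeg R).map f')
      (fun _ _ h => lastChain_eq_of_le h) f
  map_id P := (lastNeg R).map_id P.obj
  map_comp {P Q S} f g := by
    induction f using Quot.ind
    induction g using Quot.ind
    exact (lastNeg R).map_comp _ _

/-- The last-component functor `Down(C) → C`. -/
def lastDown (R : ReedyStruct C) : Down R ⥤ C where
  obj P := (lastStrict R).obj P.obj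
  map {P Q} f :=
    Quot.lift (fun f' : P.obj ⟶ Q.obj => (lastStrict R).map f')
      (fun _ _ h => lastChain_eq_of_le h) f
  map_id P := (lastStrict R).map_id P.obj
  map_comp {P Q S} f g := by
    induction f using Quot.ind
    induction g using Quot.ind
    exact (lastStrict R).map_comp _ _

/-- The wide subcategory `Γ₋` of `∫N^{-,+}(C)`: morphisms of the form
`(σ, id) : ([m], X ∘ σ) → ([n], X)` with `σ` surjective, i.e. morphisms whose simplicial
component is surjective and all of whose components are identities. -/
def GammaNeg (R : ReedyStruct C) {P Q : NegObj R} (f : P ⟶ Q) : Prop :=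
  Function.Surjective f.1.α ∧ ∀ i, IsIdMor (f.1.θ i)

/-- The wide subcategory `Γ₊` of `∫N^{-,+}(C)`: morphisms `(δ, θ)` with `δ` injective. -/
def GammaPos (R : ReedyStruct C) {P Q : NegObj R} (f : P ⟶ Q) : Prop :=
  Function.Injective f.1.α

/-- Whiskering (precomposition) with `lastF` is bijective on natural transformations
between functors out of `C`. -/
def WhiskerUnique {Γ : Type u₁} [Category.{v₁} Γ] (lastF : Γ ⥤ C) : Prop :=
  ∀ {D : Type u₂} [Category.{v₂} D] (F G : C ⥤ D)
    (ε : lastF ⋙ F ⟶ lastF ⋙ G), ∃! ε' : F ⟶ G, Functor.whiskerLeft lastF ε' = ε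

/-- `lastF : Γ ⥤ C` is a weak 1-localization of `Γ` at the `last`-weak equivalences
(the morphisms sent by `lastF` to identities). -/
def IsWeakLocalizationAtLastWeq {Γ : Type u₁} [Category.{v₁} Γ] (lastF : Γ ⥤ C) : Prop :=
  (∀ {P Q : Γ} (f : P ⟶ Q), IsIdMor (lastF.map f) → IsIso (lastF.map f)) ∧
  (∀ {E : Type u₂} [Category.{v₂} E] (G : Γ ⥤ E),
    (∀ {P Q : Γ} (f : P ⟶ Q), IsIdMor (lastF.map f) → IsIso (G.map f)) →
    ∃ H : C ⥤ E, Nonempty (lastF ⋙ H ≅ G)) ∧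
  (∀ {E : Type u₂} [Category.{v₂} E] (H H' : C ⥤ E) (θ : lastF ⋙ H ≅ lastF ⋙ H'),
    ∃! θ' : H ≅ H', Functor.isoWhiskerLeft lastF θ' = θ)

/-! The relation `(α, θ) ≤ (β, φ)` pins down `φ`: `φᵢ = Y(αᵢ ≤ βᵢ) ∘ θᵢ`. Conversely these
composites are always natural in `i`, so they form a morphism of `∫N(C)` above `(α, θ)`, which
lies in `∫N^{-,+}(C)` exactly when every `φᵢ` is in `C₊`. -/

theorem map_homOfLE_comp_eqToHom {ι : Type*} [Preorder ι] (F : ι ⥤ C) {a b c : ι}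
    (hab : a ≤ b) (hbc : b = c) :
    F.map (homOfLE hab) ≫ eqToHom (congrArg F.obj hbc) = F.map (homOfLE (hbc ▸ hab)) := by
  subst hbc
  exact Category.comp_id _

def ChainHom.raise {P Q : ChainObj C} (f : P ⟶ Q) (β : Fin (P.n + 1) →o Fin (Q.n + 1))
    (hβ : ∀ i, f.α i ≤ β i) : P ⟶ Q where
  α := β
  θ i := f.θ i ≫ Q.X.map (homOfLE (hβ i))
  natural {i j} h := by
    rw [← Category.assoc, f.natural h, Category.assoc, Category.assoc, ← Functor.map_comp,
      ← Functor.map_comp, homOfLE_comp, homOfLE_comp]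

theorem ChainHom.le_raise {P Q : ChainObj C} (f : P ⟶ Q) (β : Fin (P.n + 1) →o Fin (Q.n + 1))
    (hβ : ∀ i, f.α i ≤ β i) : ChainHom.le f (ChainHom.raise f β hβ) :=
  ⟨hβ, fun _ _ => rfl⟩

theorem ChainHom.eq_of_le_of_le {P Q : ChainObj C} {f g g' : P ⟶ Q} (hg : ChainHom.le f g)
    (hg' : ChainHom.le f g') (hα : g.α = g'.α) : g = g' := by
  obtain ⟨α, θ, _⟩ := g
  obtain ⟨α', θ', _⟩ := g'
  subst hα
  refine ChainHom.ext' rfl (heq_of_eq (funext fun i => ?_))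
  exact (hg.2 i (hg.1 i)).trans (hg'.2 i (hg'.1 i)).symm

section Statements

variable (R : ReedyStruct C)

theorem statement3 {P Q : NegObj R} (f : P ⟶ Q)
    (β : Fin (P.n + 1) →o Fin (Q.n + 1)) (hβ : ∀ i, f.1.α i ≤ β i) :
    ((∃ g : P ⟶ Q, g.1.α = β ∧ NegHom.le f g) ↔
      ∀ i, R.pos (f.1.θ i ≫ Q.X.map (homOfLE (hβ i)))) ∧
    (∀ g g' : P ⟶ Q, g.1.α = β → NegHom.le f g → g'.1.α = β → NegHom.le f g' → g = g') ∧
    (∀ (g : P ⟶ Q) (hg : g.1.α = β), NegHom.le f g →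
      ∀ i, g.1.θ i ≫ eqToHom (congrArg Q.X.obj (DFunLike.congr_fun hg i)) =
        f.1.θ i ≫ Q.X.map (homOfLE (hβ i))) := by
  refine ⟨⟨?_, fun hpos => ?_⟩, ?_, ?_⟩
  · rintro ⟨g, rfl, hle⟩ i
    exact hle.2 i (hβ i) ▸ g.2 i
  · exact ⟨⟨ChainHom.raise f.1 β hβ, hpos⟩, rfl, ChainHom.le_raise f.1 β hβ⟩
  · intro g g' hg hle hg' hle'
    exact Subtype.ext (ChainHom.eq_of_le_of_le hle hle' (hg.trans hg'.symm))
  · intro g hg hle i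
    rw [hle.2 i (hle.1 i), Category.assoc]
    exact congrArg _ (map_homOfLE_comp_eqToHom Q.X (hle.1 i) (DFunLike.congr_fun hg i))

end Statements

end ReedyPaper
end

section
/- Let (C, C₋, C₊) be a Reedy category. Then the category Down(C) is direct: the relation on its objects given by P ≺ Q iff there exists a non-identity morphism P → Q is well-founded. -/
namespace ReedyPaper

open CategoryTheory

universe v₂ u₂ v₁ u₁ v u

variable {C : Type u} [Category.{v} C]

variable {R : ReedyStruct C}

/-!
A morphism of `∫N^{--,+}_+(C)` has injective simplicial part, so it never shortens a chain, and
between chains of the same length its simplicial part is the identity. Its components then lie in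
`C₊`, so each vertex either stays fixed or strictly increases in the Reedy order. If no vertex moves,
every component is a `C₊`-endomorphism, hence an identity (the Reedy order is irreflexive), and the
morphism is an identity. So non-identity morphisms of `Down(C)` strictly increase the length, or
the vertices lexicographically, and both orders are well-founded.
-/

theorem _root_.Pi.lex_of_forall_eq_or {ι : Type*} {β : ι → Type*} {r : ι → ι → Prop}
    {s : ∀ {i}, β i → β i → Prop} (hwf : WellFounded r) {x y : ∀ i, β i}
    (h : ∀ i, x i = y i ∨ s (x i) (y i)) (hne : x ≠ y) : Pi.Lex r s x y := by
  obtain ⟨i, hi, hmin⟩ := hwf.has_min {i | x i ≠ y i} (Function.ne_iff.mp hne)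
  exact ⟨i, fun j hj => not_not.mp fun hxy => hmin j hxy hj, (h i).resolve_left hi⟩

theorem _root_.CategoryTheory.Functor.eq_of_natural_isIdMor {J : Type*} [Preorder J] {X Y : J ⥤ C}
    (θ : ∀ j, X.obj j ⟶ Y.obj j)
    (nat : ∀ {i j : J} (h : i ≤ j), X.map (homOfLE h) ≫ θ j = θ i ≫ Y.map (homOfLE h))
    (hθ : ∀ j, IsIdMor (θ j)) : X = Y := by
  refine CategoryTheory.Functor.ext (fun j => (hθ j).1) fun i j u => ?_
  obtain ⟨_, hθi⟩ := hθ i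
  obtain ⟨_, hθj⟩ := hθ j
  have := nat (leOfHom u)
  rwa [hθi, hθj, comp_eqToHom_iff, Category.assoc] at this

namespace ReedyStruct

def PosLT (R : ReedyStruct C) (x y : C) : Prop := ∃ f : x ⟶ y, R.pos f ∧ ¬ IsIdMor f

theorem wellFounded_posLT (R : ReedyStruct C) : WellFounded R.PosLT :=
  Subrelation.wf Or.inl R.wf

theorem isIdMor_of_pos (R : ReedyStruct C) {x y : C} {f : x ⟶ y} (hf : R.pos f) (h : x = y) :
    IsIdMor f := by
  subst h
  by_contra hne
  exact R.wellFounded_posLT.irrefl.irrefl x ⟨f, hf, hne⟩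

end ReedyStruct

namespace Down

def vertices (P : Down R) : Σ' n : ℕ, Fin (n + 1) → C :=
  ⟨P.obj.toNegObj.n, fun i => P.obj.toNegObj.X.obj i⟩

variable (R) in
def VerticesLT : (Σ' n : ℕ, Fin (n + 1) → C) → (Σ' n : ℕ, Fin (n + 1) → C) → Prop :=
  PSigma.Lex (· < ·) fun _ => Pi.Lex (· < ·) R.PosLT

theorem wellFounded_verticesLT (R : ReedyStruct C) : WellFounded (VerticesLT R) :=
  WellFounded.psigma_lex wellFounded_lt fun _ => Pi.Lex.wellFounded _ fun _ => R.wellFounded_posLT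

theorem verticesLT_of_not_isIdMor {P Q : Down R} (f : P ⟶ Q) (hf : ¬ IsIdMor f) :
    VerticesLT R P.vertices Q.vertices := by
  obtain ⟨⟨⟨m, X, hX⟩, rX⟩⟩ := P
  obtain ⟨⟨⟨n, Y, hY⟩, rY⟩⟩ := Q
  induction f using Quot.ind with | mk g => ?_
  obtain ⟨⟨⟨α, θ, nat⟩, hθ⟩, hα⟩ := g
  obtain hlt | rfl := (Nat.succ_le_succ_iff.mp (Fin.le_of_injective α hα)).lt_or_eq
  · exact PSigma.Lex.left _ _ hlt
  obtain rfl : α = .id := OrderHom.eq_id_of_injective α hα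
  refine PSigma.Lex.right _ (Pi.lex_of_forall_eq_or wellFounded_lt (fun i => ?_) fun hXY => hf ?_)
  · by_cases h : IsIdMor (θ i)
    exacts [Or.inl h.1, Or.inr ⟨θ i, hθ i, h⟩]
  have hθid i : IsIdMor (θ i) := R.isIdMor_of_pos (hθ i) (congrFun hXY i)
  obtain rfl : X = Y := Functor.eq_of_natural_isIdMor θ nat hθid
  obtain rfl : θ = fun i => 𝟙 _ := funext fun i => (hθid i).2
  exact ⟨rfl, rfl⟩

end Down

section Statements

variable (R : ReedyStruct C)

theorem statement13 :
    WellFounded (fun P Q : Down R => ∃ f : P ⟶ Q, ¬ IsIdMor f) :=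
  Subrelation.wf (fun ⟨f, hf⟩ => Down.verticesLT_of_not_isIdMor f hf)
    (InvImage.wf Down.vertices (Down.wellFounded_verticesLT R))

end Statements

end ReedyPaper
end

section
/- Let (C, C₋, C₊) be a Reedy category, D a category, and F : Down_*(C) → D a functor that sends every last-weak equivalence of Down_*(C) to an isomorphism of D. Then there exist a functor F̃ : C → D and a natural isomorphism θ : F̃ ∘ last ≅ F, where last : Down_*(C) → C is the last-component functor. -/
/-
A functor `G` out of `∫N^{-,+}(C)` that inverts the `last`-weak equivalences factors through
the one-object chains. A morphism `p : x → y` of `C₊` is a morphism of one-object chains. A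
morphism `g : x → z` of `C₋` is a chain `[x → z]`, which receives `x` and `z` by inclusions;
the inclusion of the last object `z` is a weak equivalence, so `g` is sent to
`G(incl x) ≫ G(incl z)⁻¹`. An arbitrary morphism is sent through its Reedy factorization.
Functoriality comes from the chain `[x → y → z]` for composites in `C₋`, and for a morphism of
`C₊` followed by one of `C₋` from refactoring it and comparing the two chains `[x → z]` by a
square; the uniqueness of Reedy factorizations makes the choices irrelevant. The inclusions of
last objects then give `F̃ ∘ last ≅ G`. `Down_*(C)` has the same objects as `∫N^{-,+}(C)` and
is a quotient of it, so this applies to `F`.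
-/

namespace ReedyPaper

open CategoryTheory

universe v₂ u₂ v₁ u₁ v u

variable {C : Type u} [Category.{v} C]

variable {R : ReedyStruct C}

namespace ReedyStruct

variable (R : ReedyStruct C)

noncomputable def factor {x y : C} (f : x ⟶ y) : Σ z : C, (x ⟶ z) × (z ⟶ y) :=
  (R.factor_existsUnique f).choose

theorem factor_spec {x y : C} (f : x ⟶ y) :
    R.neg (R.factor f).2.1 ∧ R.pos (R.factor f).2.2 ∧ (R.factor f).2.1 ≫ (R.factor f).2.2 = f :=
  (R.factor_existsUnique f).choose_spec.1

theorem factor_unique {x y z : C} {f : x ⟶ y} {g : x ⟶ z} {p : z ⟶ y}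
    (hg : R.neg g) (hp : R.pos p) (hf : g ≫ p = f) : R.factor f = ⟨z, g, p⟩ :=
  ((R.factor_existsUnique f).choose_spec.2 _ ⟨hg, hp, hf⟩).symm

end ReedyStruct

theorem NegHom.ext {P Q : NegObj R} {f g : P ⟶ Q} (hα : ∀ i, f.1.α i = g.1.α i)
    (hθ : ∀ i, f.1.θ i ≫ Q.chain.X.map (eqToHom (hα i)) = g.1.θ i) : f = g := by
  obtain ⟨⟨α, θ, _⟩, _⟩ := f
  obtain ⟨⟨α', θ', _⟩, _⟩ := g
  obtain rfl : α = α' := OrderHom.ext _ _ (funext hα)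
  obtain rfl : θ = θ' := funext fun i => by simpa using hθ i
  rfl

namespace NegObj

def mk₀ (x : C) : NegObj R where
  n := 0
  X := (Functor.const _).obj x
  negMap _ := R.neg_id x

def mk₁ {x z : C} (g : x ⟶ z) (hg : R.neg g) : NegObj R where
  n := 1
  X := ComposableArrows.mk₁ g
  negMap {i j} h :=
    match i, j, h with
    | ⟨0, _⟩, ⟨0, _⟩, _ => R.neg_id x
    | ⟨0, _⟩, ⟨1, _⟩, _ => hg
    | ⟨1, _⟩, ⟨1, _⟩, _ => R.neg_id z
    | ⟨1, _⟩, ⟨0, _⟩, h => absurd h (by simp)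

def mk₂ {x y z : C} (g : x ⟶ y) (g' : y ⟶ z) (hg : R.neg g) (hg' : R.neg g') : NegObj R where
  n := 2
  X := ComposableArrows.mk₂ g g'
  negMap {i j} h :=
    match i, j, h with
    | ⟨0, _⟩, ⟨0, _⟩, _ => R.neg_id x
    | ⟨0, _⟩, ⟨1, _⟩, _ => hg
    | ⟨0, _⟩, ⟨2, _⟩, _ => R.neg_comp _ _ hg hg'
    | ⟨1, _⟩, ⟨1, _⟩, _ => R.neg_id y
    | ⟨1, _⟩, ⟨2, _⟩, _ => hg'
    | ⟨2, _⟩, ⟨2, _⟩, _ => R.neg_id z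
    | ⟨1, _⟩, ⟨0, _⟩, h => absurd h (by simp)
    | ⟨2, _⟩, ⟨0, _⟩, h => absurd h (by simp)
    | ⟨2, _⟩, ⟨1, _⟩, h => absurd h (by simp)

def homMk₀ {x y : C} (p : x ⟶ y) (hp : R.pos p) : (mk₀ x : NegObj R) ⟶ mk₀ y :=
  ⟨{ α := OrderHom.id
     θ := fun _ => p
     natural := fun _ => (Category.id_comp p).trans (Category.comp_id p).symm }, fun _ => hp⟩

theorem homMk₀_id (x : C) : homMk₀ (𝟙 x) (R.pos_id x) = 𝟙 (mk₀ x : NegObj R) :=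
  rfl

theorem homMk₀_comp {x y z : C} (p : x ⟶ y) (p' : y ⟶ z) (hp : R.pos p) (hp' : R.pos p') :
    homMk₀ (p ≫ p') (R.pos_comp _ _ hp hp') = homMk₀ p hp ≫ homMk₀ p' hp' :=
  rfl

def incl (P : NegObj R) (i : Fin (P.n + 1)) : (mk₀ (P.X.obj i) : NegObj R) ⟶ P :=
  ⟨{ α := OrderHom.const _ i
     θ := fun _ => 𝟙 _
     natural := fun {j k} _ => by
       obtain rfl : j = k := Subsingleton.elim (α := Fin 1) j k
       show 𝟙 _ ≫ 𝟙 _ = 𝟙 _ ≫ P.X.map (𝟙 i)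
       simp }, fun _ => R.pos_id _⟩

theorem incl_comp {P Q : NegObj R} (i : Fin (P.n + 1)) (f : P ⟶ Q) :
    incl P i ≫ f = homMk₀ (f.1.θ i) (f.2 i) ≫ incl Q (f.1.α i) :=
  NegHom.ext (fun _ => rfl) fun _ => by
    show (𝟙 _ ≫ f.1.θ i) ≫ Q.chain.X.map (𝟙 _) = f.1.θ i ≫ 𝟙 _
    simp

def inclSource {x z : C} (g : x ⟶ z) (hg : R.neg g) : (mk₀ x : NegObj R) ⟶ mk₁ g hg :=
  incl (mk₁ g hg) 0

def inclTarget {x z : C} (g : x ⟶ z) (hg : R.neg g) : (mk₀ z : NegObj R) ⟶ mk₁ g hg :=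
  incl (mk₁ g hg) (Fin.last 1)

section FromMk₁

variable {x z : C} {g : x ⟶ z} (hg : R.neg g) (Q : NegObj R) {i j : Fin (Q.n + 1)}
  (hij : i ≤ j) (h : x ⟶ Q.X.obj i) (h' : z ⟶ Q.X.obj j) (hh : R.pos h) (hh' : R.pos h')
  (comm : g ≫ h' = h ≫ Q.X.map (homOfLE hij))

def fromMk₁ : mk₁ g hg ⟶ Q :=
  ⟨{ α := ⟨fun t => match t with
       | ⟨0, _⟩ => i
       | ⟨1, _⟩ => j,
       fun a b hab => by
         match a, b, hab with
         | ⟨0, _⟩, ⟨0, _⟩, _ => exact le_rfl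
         | ⟨0, _⟩, ⟨1, _⟩, _ => exact hij
         | ⟨1, _⟩, ⟨1, _⟩, _ => exact le_rfl
         | ⟨1, _⟩, ⟨0, _⟩, hab => exact absurd hab (by simp)⟩
     θ := fun t => match t with
       | ⟨0, _⟩ => h
       | ⟨1, _⟩ => h'
     natural := fun {s t} hst => by
       match s, t, hst with
       | ⟨0, _⟩, ⟨0, _⟩, _ =>
         show 𝟙 x ≫ h = h ≫ Q.X.map (𝟙 i)
         simp
       | ⟨0, _⟩, ⟨1, _⟩, _ => exact comm
       | ⟨1, _⟩, ⟨1, _⟩, _ =>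
         show 𝟙 z ≫ h' = h' ≫ Q.X.map (𝟙 j)
         simp
       | ⟨1, _⟩, ⟨0, _⟩, hst => exact absurd hst (by simp) },
   fun t => match t with
     | ⟨0, _⟩ => hh
     | ⟨1, _⟩ => hh'⟩

theorem inclSource_comp_fromMk₁ :
    inclSource g hg ≫ fromMk₁ hg Q hij h h' hh hh' comm = homMk₀ h hh ≫ incl Q i :=
  incl_comp _ _

theorem inclTarget_comp_fromMk₁ :
    inclTarget g hg ≫ fromMk₁ hg Q hij h h' hh hh' comm = homMk₀ h' hh' ≫ incl Q j :=
  incl_comp _ _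

end FromMk₁

end NegObj

open NegObj

variable (R) in
def lastWeq : MorphismProperty (NegObj R) := fun _ _ f => IsIdMor ((lastNeg R).map f)

theorem lastWeq_incl_last (P : NegObj R) : lastWeq R (incl P (Fin.last P.n)) :=
  ⟨rfl, by
    show 𝟙 _ ≫ P.X.map (𝟙 _) = 𝟙 _
    simp⟩

theorem lastWeq_inclTarget {x z : C} (g : x ⟶ z) (hg : R.neg g) : lastWeq R (inclTarget g hg) :=
  lastWeq_incl_last _

section Extension

variable {D : Type u₂} [Category.{v₂} D] (G : NegObj R ⥤ D) (hG : (lastWeq R).IsInvertedBy G)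

noncomputable def mapInclLastIso (P : NegObj R) : G.obj (mk₀ (P.X.obj (Fin.last P.n))) ≅ G.obj P :=
  haveI := hG _ (lastWeq_incl_last P)
  asIso (G.map (incl P (Fin.last P.n)))

noncomputable def extendNeg {x z : C} (g : x ⟶ z) (hg : R.neg g) :
    G.obj (mk₀ x) ⟶ G.obj (mk₀ z) :=
  haveI := hG _ (lastWeq_inclTarget g hg)
  G.map (inclSource g hg) ≫ inv (G.map (inclTarget g hg))

theorem extendNeg_comp_map_inclTarget {x z : C} (g : x ⟶ z) (hg : R.neg g) :
    extendNeg G hG g hg ≫ G.map (inclTarget g hg) = G.map (inclSource g hg) := by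
  have := hG _ (lastWeq_inclTarget g hg)
  simp [extendNeg]

theorem extendNeg_comp_map_incl_of_comm {x z : C} {g : x ⟶ z} (hg : R.neg g) (Q : NegObj R)
    {i j : Fin (Q.n + 1)} (hij : i ≤ j) (h : x ⟶ Q.X.obj i) (h' : z ⟶ Q.X.obj j)
    (hh : R.pos h) (hh' : R.pos h') (comm : g ≫ h' = h ≫ Q.X.map (homOfLE hij)) :
    extendNeg G hG g hg ≫ G.map (homMk₀ h' hh') ≫ G.map (incl Q j) =
      G.map (homMk₀ h hh) ≫ G.map (incl Q i) := by
  have := extendNeg_comp_map_inclTarget G hG g hg =≫ G.map (fromMk₁ hg Q hij h h' hh hh' comm)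
  rwa [Category.assoc, ← G.map_comp, ← G.map_comp, inclSource_comp_fromMk₁,
    inclTarget_comp_fromMk₁, G.map_comp, G.map_comp] at this

theorem extendNeg_comp_map_incl (Q : NegObj R) {i j : Fin (Q.n + 1)} (hij : i ≤ j) :
    extendNeg G hG (Q.X.map (homOfLE hij)) (Q.negMap hij) ≫ G.map (incl Q j) =
      G.map (incl Q i) := by
  simpa [homMk₀_id] using extendNeg_comp_map_incl_of_comm G hG (Q.negMap hij) Q hij (𝟙 _) (𝟙 _)
    (R.pos_id _) (R.pos_id _) (by simp)

theorem extendNeg_id (x : C) : extendNeg G hG (𝟙 x) (R.neg_id x) = 𝟙 _ := by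
  let collapse := fromMk₁ (R.neg_id x) (mk₀ x) (le_refl (0 : Fin 1)) (𝟙 x) (𝟙 x) (R.pos_id x)
    (R.pos_id x) rfl
  have hs : inclSource (𝟙 x) (R.neg_id x) ≫ collapse = 𝟙 (mk₀ x) := by
    refine NegHom.ext (fun _ => Subsingleton.elim (α := Fin 1) _ _) fun _ => ?_
    show (𝟙 x ≫ 𝟙 x) ≫ 𝟙 x = 𝟙 x
    simp
  have ht : inclTarget (𝟙 x) (R.neg_id x) ≫ collapse = 𝟙 (mk₀ x) := by
    refine NegHom.ext (fun _ => Subsingleton.elim (α := Fin 1) _ _) fun _ => ?_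
    show (𝟙 x ≫ 𝟙 x) ≫ 𝟙 x = 𝟙 x
    simp
  have := extendNeg_comp_map_inclTarget G hG _ (R.neg_id x) =≫ G.map collapse
  rwa [Category.assoc, ← G.map_comp, ← G.map_comp, hs, ht, G.map_id, Category.comp_id] at this

theorem extendNeg_comp {x y z : C} (g : x ⟶ y) (g' : y ⟶ z) (hg : R.neg g) (hg' : R.neg g') :
    extendNeg G hG (g ≫ g') (R.neg_comp _ _ hg hg') =
      extendNeg G hG g hg ≫ extendNeg G hG g' hg' := by
  let T : NegObj R := mk₂ g g' hg hg'
  have h01 : extendNeg G hG g hg ≫ G.map (incl T 1) = G.map (incl T 0) :=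
    extendNeg_comp_map_incl G hG T (Fin.zero_le (1 : Fin 3))
  have h12 : extendNeg G hG g' hg' ≫ G.map (incl T (Fin.last 2)) = G.map (incl T 1) :=
    extendNeg_comp_map_incl G hG T (Fin.le_last (1 : Fin 3))
  have h02 : extendNeg G hG (g ≫ g') _ ≫ G.map (incl T (Fin.last 2)) = G.map (incl T 0) :=
    extendNeg_comp_map_incl G hG T (Fin.zero_le (Fin.last 2))
  refine ((mapInclLastIso G hG T).cancel_iso_hom_right _ _).mp ?_
  exact h02.trans <| h01.symm.trans <|
    (congrArg (extendNeg G hG g hg ≫ ·) h12.symm).trans (Category.assoc _ _ _).symm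

theorem map_homMk₀_comp_extendNeg {x z x' z' : C} {g : x ⟶ z} {g' : x' ⟶ z'}
    (hg : R.neg g) (hg' : R.neg g') (h : x ⟶ x') (h' : z ⟶ z') (hh : R.pos h) (hh' : R.pos h')
    (comm : g ≫ h' = h ≫ g') :
    G.map (homMk₀ h hh) ≫ extendNeg G hG g' hg' = extendNeg G hG g hg ≫ G.map (homMk₀ h' hh') := by
  have := hG _ (lastWeq_inclTarget g' hg')
  rw [← cancel_mono (G.map (inclTarget g' hg')), Category.assoc, Category.assoc,
    extendNeg_comp_map_inclTarget]
  exact (extendNeg_comp_map_incl_of_comm G hG hg (mk₁ g' hg') (Fin.zero_le (Fin.last 1)) h h' hh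
    hh' comm).symm

noncomputable def extendMap {x y : C} (f : x ⟶ y) : G.obj (mk₀ x) ⟶ G.obj (mk₀ y) :=
  extendNeg G hG (R.factor f).2.1 (R.factor_spec f).1 ≫
    G.map (homMk₀ (R.factor f).2.2 (R.factor_spec f).2.1)

theorem extendMap_eq {x y z : C} {f : x ⟶ y} {g : x ⟶ z} {p : z ⟶ y} (hg : R.neg g)
    (hp : R.pos p) (hf : g ≫ p = f) :
    extendMap G hG f = extendNeg G hG g hg ≫ G.map (homMk₀ p hp) := by
  have key := R.factor_unique hg hp hf
  obtain ⟨hg', hp', -⟩ := R.factor_spec f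
  change extendNeg G hG _ hg' ≫ G.map (homMk₀ _ hp') = _
  generalize R.factor f = t at key hg' hp' ⊢
  subst key
  rfl

theorem extendMap_pos_comp_neg {x y z : C} {p : x ⟶ y} {g : y ⟶ z} (hp : R.pos p)
    (hg : R.neg g) : extendMap G hG (p ≫ g) = G.map (homMk₀ p hp) ≫ extendNeg G hG g hg := by
  obtain ⟨hg', hp', hf⟩ := R.factor_spec (p ≫ g)
  exact (map_homMk₀_comp_extendNeg G hG hg' hg p _ hp hp' hf).symm

theorem extendMap_neg_comp_comp_pos {w x y z : C} {g : w ⟶ x} (f : x ⟶ y) {p : y ⟶ z}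
    (hg : R.neg g) (hp : R.pos p) :
    extendMap G hG (g ≫ f ≫ p) =
      extendNeg G hG g hg ≫ extendMap G hG f ≫ G.map (homMk₀ p hp) := by
  obtain ⟨hg', hp', hf⟩ := R.factor_spec f
  rw [extendMap_eq G hG (R.neg_comp _ _ hg hg') (R.pos_comp _ _ hp' hp)
      (by simp only [Category.assoc, reassoc_of% hf]),
    extendNeg_comp G hG _ _ hg hg', homMk₀_comp _ _ hp' hp, G.map_comp]
  simp only [extendMap, Category.assoc]

noncomputable def extend : C ⥤ D where
  obj x := G.obj (mk₀ x)
  map f := extendMap G hG f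
  map_id x := by
    rw [extendMap_eq G hG (R.neg_id x) (R.pos_id x) (Category.comp_id _), extendNeg_id, homMk₀_id,
      G.map_id, Category.comp_id]
  map_comp f f' := by
    obtain ⟨hg₁, hp₁, hf₁⟩ := R.factor_spec f
    obtain ⟨hg₂, hp₂, hf₂⟩ := R.factor_spec f'
    have hff : f ≫ f' =
        (R.factor f).2.1 ≫ ((R.factor f).2.2 ≫ (R.factor f').2.1) ≫ (R.factor f').2.2 := by
      simp only [Category.assoc, reassoc_of% hf₁, hf₂]
    rw [hff, extendMap_neg_comp_comp_pos G hG _ hg₁ hp₂, extendMap_pos_comp_neg G hG hp₁ hg₂]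
    simp only [extendMap, Category.assoc]

noncomputable def lastNegCompExtendIso : lastNeg R ⋙ extend G hG ≅ G :=
  NatIso.ofComponents (mapInclLastIso G hG) fun {P Q} f => by
    have hθ := extendMap_pos_comp_neg G hG (f.2 (Fin.last P.n))
      (Q.negMap (Fin.le_last (f.1.α (Fin.last P.n))))
    have hQ := extendNeg_comp_map_incl G hG Q (Fin.le_last (f.1.α (Fin.last P.n)))
    have hP := congrArg G.map (incl_comp (Fin.last P.n) f)
    change extendMap G hG (f.1.θ _ ≫ Q.X.map (homOfLE _)) ≫ G.map (incl Q (Fin.last Q.n)) =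
      G.map (incl P (Fin.last P.n)) ≫ G.map f
    exact (congrArg (· ≫ _) hθ).trans <| (Category.assoc _ _ _).trans <|
      (congrArg (_ ≫ ·) hQ).trans <| (G.map_comp _ _).symm.trans <| hP.symm.trans (G.map_comp _ _)

end Extension

section Statements

variable (R : ReedyStruct C)

theorem statement18 {D : Type u₂} [Category.{v₂} D] (F : DownStar R ⥤ D)
    (hF : ∀ {P Q : DownStar R} (f : P ⟶ Q),
      IsIdMor ((lastDownStar R).map f) → IsIso (F.map f)) :
    ∃ Ft : C ⥤ D, Nonempty (lastDownStar R ⋙ Ft ≅ F) := by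
  have hG : (lastWeq R).IsInvertedBy (qStar R ⋙ F) := fun _ _ f hf => hF ((qStar R).map f) hf
  let e := lastNegCompExtendIso (qStar R ⋙ F) hG
  refine ⟨extend (qStar R ⋙ F) hG, ⟨NatIso.ofComponents (fun P => e.app P.obj) ?_⟩⟩
  rintro ⟨P⟩ ⟨Q⟩ ⟨f⟩
  exact e.hom.naturality f

end Statements

end ReedyPaper
end
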